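/- Let f = f₁ + f₂·j be hyperholomorphic and nonvanishing on an open set U ⊆ ℂ², and let g = |f|⁻²·f̄ = |f|⁻²(f̄₁ − f₂·j) be its pointwise inverse, where |f|² = |f₁|² + |f₂|². Then g is hyperholomorphic on U if and only if the equations (f̄₁ − f₁)·∂f̄₁/∂z₁ − f̄₂·∂f₂/∂z₁ − f₂·∂f̄₁/∂z̄₂ = 0 and f̄₂·∂f₁/∂z₁ + (f̄₁ − f₁)·∂f̄₂/∂z₁ − f₂·∂f̄₂/∂z̄₂ = 0 hold on U. -/

import Mathlib

noncomputable section

abbrev H := Quaternion ℝ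

/-- The embedding of a complex number `a + b·i` as the quaternion `a + b·i`. -/
def cq (z : ℂ) : H := ⟨z.re, z.im, 0, 0⟩

/-- The quaternion unit `i`. -/
def iq : H := ⟨0, 1, 0, 0⟩

/-- The quaternion unit `j`. -/
def jq : H := ⟨0, 0, 1, 0⟩

/-- Wirtinger derivative `∂f/∂z₁` of a function of two complex variables. -/
def dz1 (f : ℂ × ℂ → ℂ) (p : ℂ × ℂ) : ℂ :=
  (2 : ℂ)⁻¹ * (fderiv ℝ f p (1, 0) - Complex.I * fderiv ℝ f p (Complex.I, 0))

/-- Wirtinger derivative `∂f/∂z̄₁`. -/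
def dz1c (f : ℂ × ℂ → ℂ) (p : ℂ × ℂ) : ℂ :=
  (2 : ℂ)⁻¹ * (fderiv ℝ f p (1, 0) + Complex.I * fderiv ℝ f p (Complex.I, 0))

/-- Wirtinger derivative `∂f/∂z₂`. -/
def dz2 (f : ℂ × ℂ → ℂ) (p : ℂ × ℂ) : ℂ :=
  (2 : ℂ)⁻¹ * (fderiv ℝ f p (0, 1) - Complex.I * fderiv ℝ f p (0, Complex.I))

/-- Wirtinger derivative `∂f/∂z̄₂`. -/
def dz2c (f : ℂ × ℂ → ℂ) (p : ℂ × ℂ) : ℂ :=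
  (2 : ℂ)⁻¹ * (fderiv ℝ f p (0, 1) + Complex.I * fderiv ℝ f p (0, Complex.I))

/-- Pointwise complex conjugate of a complex-valued function. -/
def conjf (f : ℂ × ℂ → ℂ) : ℂ × ℂ → ℂ := fun p => starRingEnd ℂ (f p)

/-- `f = f₁ + f₂·j` is hyperholomorphic on `U`:
`∂f₁/∂z̄₁ − ∂f̄₂/∂z₂ = 0` and `∂f₁/∂z̄₂ + ∂f̄₂/∂z₁ = 0` on `U`. -/
def Hyperholo (U : Set (ℂ × ℂ)) (f₁ f₂ : ℂ × ℂ → ℂ) : Prop :=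
  ∀ p ∈ U, dz1c f₁ p - dz2 (conjf f₂) p = 0 ∧ dz2c f₁ p + dz1 (conjf f₂) p = 0

/-- Quaternion-valued Wirtinger derivative `∂F/∂z̄₁ = ½(∂F/∂x₁ + i·∂F/∂y₁)`. -/
def dbar1H (F : ℂ × ℂ → H) (p : ℂ × ℂ) : H :=
  (2 : ℝ)⁻¹ • (fderiv ℝ F p (1, 0) + iq * fderiv ℝ F p (Complex.I, 0))

/-- Quaternion-valued Wirtinger derivative `∂F/∂z̄₂`. -/
def dbar2H (F : ℂ × ℂ → H) (p : ℂ × ℂ) : H :=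
  (2 : ℝ)⁻¹ • (fderiv ℝ F p (0, 1) + iq * fderiv ℝ F p (0, Complex.I))

/-- The modified Cauchy-Fueter operator `𝒟F = ½(∂F/∂z̄₁ + j·∂F/∂z̄₂)`. -/
def Dop (F : ℂ × ℂ → H) (p : ℂ × ℂ) : H :=
  (2 : ℝ)⁻¹ • (dbar1H F p + jq * dbar2H F p)
open Complex ComplexConjugate

lemma mulD (h k : ℂ × ℂ → ℂ) (p v : ℂ × ℂ) (hh : DifferentiableAt ℝ h p)
    (hk : DifferentiableAt ℝ k p) :
    fderiv ℝ (fun q => h q * k q) p v = fderiv ℝ h p v * k p + h p * fderiv ℝ k p v := by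
  rw [fderiv_fun_mul hh hk]
  simp only [ContinuousLinearMap.add_apply, ContinuousLinearMap.smul_apply, smul_eq_mul]
  ring

lemma conjD (h : ℂ × ℂ → ℂ) (p v : ℂ × ℂ) :
    fderiv ℝ (fun q => starRingEnd ℂ (h q)) p v = starRingEnd ℂ (fderiv ℝ h p v) := by
  have : (fun q => starRingEnd ℂ (h q)) = (Complex.conjCLE : ℂ ≃L[ℝ] ℂ) ∘ h := rfl
  rw [this, ContinuousLinearEquiv.comp_fderiv]
  simp

lemma invD (h : ℂ × ℂ → ℂ) (p v : ℂ × ℂ) (hh : DifferentiableAt ℝ h p) (h0 : h p ≠ 0) :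
    fderiv ℝ (fun q => (h q)⁻¹) p v = -((h p)⁻¹ * fderiv ℝ h p v * (h p)⁻¹) := by
  have H : HasFDerivAt (fun q => (h q)⁻¹)
      ((-ContinuousLinearMap.mulLeftRight ℝ ℂ (h p)⁻¹ (h p)⁻¹).comp (fderiv ℝ h p)) p :=
    (hasFDerivAt_inv' h0).comp p hh.hasFDerivAt
  rw [H.fderiv]
  simp [ContinuousLinearMap.mulLeftRight_apply]

lemma conjf_eq (f : ℂ × ℂ → ℂ) : conjf f = fun q => starRingEnd ℂ (f q) := rfl

lemma pointwise (f₁ f₂ : ℂ × ℂ → ℂ) (p : ℂ × ℂ)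
    (hd1 : DifferentiableAt ℝ f₁ p) (hd2 : DifferentiableAt ℝ f₂ p)
    (h0 : f₁ p * conj (f₁ p) + f₂ p * conj (f₂ p) ≠ 0)
    (hf1 : dz1c f₁ p - dz2 (conjf f₂) p = 0)
    (hf2 : dz2c f₁ p + dz1 (conjf f₂) p = 0) :
    ((dz1c (fun q => ((Complex.normSq (f₁ q) + Complex.normSq (f₂ q) : ℝ) : ℂ)⁻¹ * starRingEnd ℂ (f₁ q)) p
        - dz2 (conjf (fun q => -(((Complex.normSq (f₁ q) + Complex.normSq (f₂ q) : ℝ) : ℂ)⁻¹ * f₂ q))) p = 0 ∧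
      dz2c (fun q => ((Complex.normSq (f₁ q) + Complex.normSq (f₂ q) : ℝ) : ℂ)⁻¹ * starRingEnd ℂ (f₁ q)) p
        + dz1 (conjf (fun q => -(((Complex.normSq (f₁ q) + Complex.normSq (f₂ q) : ℝ) : ℂ)⁻¹ * f₂ q))) p = 0) ↔
     ((starRingEnd ℂ (f₁ p) - f₁ p) * dz1 (conjf f₁) p
        - starRingEnd ℂ (f₂ p) * dz1 f₂ p - f₂ p * dz2c (conjf f₁) p = 0 ∧
      starRingEnd ℂ (f₂ p) * dz1 f₁ p
        + (starRingEnd ℂ (f₁ p) - f₁ p) * dz1 (conjf f₂) p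
        - f₂ p * dz2c (conjf f₂) p = 0)) := by
  have hcast : ∀ q, ((Complex.normSq (f₁ q) + Complex.normSq (f₂ q) : ℝ) : ℂ)
      = f₁ q * conj (f₁ q) + f₂ q * conj (f₂ q) := by
    intro q; rw [Complex.ofReal_add, Complex.mul_conj, Complex.mul_conj]
  set ρ : ℂ × ℂ → ℂ := fun q => f₁ q * conj (f₁ q) + f₂ q * conj (f₂ q) with hρ
  have hG1 : (fun q => ((Complex.normSq (f₁ q) + Complex.normSq (f₂ q) : ℝ) : ℂ)⁻¹ * starRingEnd ℂ (f₁ q))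
      = fun q => (ρ q)⁻¹ * conj (f₁ q) := by
    funext q; rw [hcast]
  have hG2 : conjf (fun q => -(((Complex.normSq (f₁ q) + Complex.normSq (f₂ q) : ℝ) : ℂ)⁻¹ * f₂ q))
      = fun q => -((ρ q)⁻¹ * conj (f₂ q)) := by
    funext q
    simp only [conjf, map_neg, map_mul, map_inv₀]
    rw [Complex.conj_ofReal, hcast]
  rw [hG1, hG2]
  have hc1 : DifferentiableAt ℝ (fun q => starRingEnd ℂ (f₁ q)) p :=
    Complex.conjCLE.differentiable.differentiableAt.comp p hd1
  have hc2 : DifferentiableAt ℝ (fun q => starRingEnd ℂ (f₂ q)) p :=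
    Complex.conjCLE.differentiable.differentiableAt.comp p hd2
  have hdρ : DifferentiableAt ℝ ρ p := (hd1.mul hc1).add (hd2.mul hc2)
  have hρp : ρ p = f₁ p * conj (f₁ p) + f₂ p * conj (f₂ p) := rfl
  have h0' : ρ p ≠ 0 := by rw [hρp]; exact h0
  have hdρi : DifferentiableAt ℝ (fun q => (ρ q)⁻¹) p := hdρ.inv h0'
  have Dρ : ∀ v, fderiv ℝ ρ p v
      = fderiv ℝ f₁ p v * conj (f₁ p) + f₁ p * conj (fderiv ℝ f₁ p v)
        + (fderiv ℝ f₂ p v * conj (f₂ p) + f₂ p * conj (fderiv ℝ f₂ p v)) := by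
    intro v
    have : fderiv ℝ ρ p v = fderiv ℝ (fun q => f₁ q * conj (f₁ q)) p v
        + fderiv ℝ (fun q => f₂ q * conj (f₂ q)) p v := by
      rw [hρ, fderiv_fun_add (f := fun q => f₁ q * conj (f₁ q)) (g := fun q => f₂ q * conj (f₂ q)) (hd1.mul hc1) (hd2.mul hc2)]; rfl
    rw [this, mulD _ _ _ _ hd1 hc1, mulD _ _ _ _ hd2 hc2, conjD, conjD]
  have DG1 : ∀ v, fderiv ℝ (fun q => (ρ q)⁻¹ * conj (f₁ q)) p v
      = -((ρ p)⁻¹ * fderiv ℝ ρ p v * (ρ p)⁻¹) * conj (f₁ p) + (ρ p)⁻¹ * conj (fderiv ℝ f₁ p v) := by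
    intro v
    rw [mulD _ _ _ _ hdρi hc1, invD _ _ _ hdρ h0', conjD]
  have DG2 : ∀ v, fderiv ℝ (fun q => -((ρ q)⁻¹ * conj (f₂ q))) p v
      = -(-((ρ p)⁻¹ * fderiv ℝ ρ p v * (ρ p)⁻¹) * conj (f₂ p) + (ρ p)⁻¹ * conj (fderiv ℝ f₂ p v)) := by
    intro v
    have : fderiv ℝ (fun q => -((ρ q)⁻¹ * conj (f₂ q))) p
        = -fderiv ℝ (fun q => ((ρ q)⁻¹ * conj (f₂ q))) p := fderiv_neg
    rw [this, ContinuousLinearMap.neg_apply, mulD _ _ _ _ hdρi hc2, invD _ _ _ hdρ h0', conjD]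
  simp only [dz1c, dz2, conjf_eq, conjD] at hf1
  simp only [dz2c, dz1, conjf_eq, conjD] at hf2
  have hu : ρ p * (ρ p)⁻¹ = 1 := mul_inv_cancel₀ h0'
  have h1c : (2:ℂ)⁻¹ * (conj (fderiv ℝ f₁ p (1, 0)) - Complex.I * conj (fderiv ℝ f₁ p (Complex.I, 0)))
      - (2:ℂ)⁻¹ * (fderiv ℝ f₂ p (0, 1) + Complex.I * fderiv ℝ f₂ p (0, Complex.I)) = 0 := by
    have h := congrArg (starRingEnd ℂ) hf1
    simp only [map_sub, map_add, map_mul, map_inv₀, map_zero, Complex.conj_I,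
      Complex.conj_conj, map_ofNat] at h
    linear_combination h
  have h2c : (2:ℂ)⁻¹ * (conj (fderiv ℝ f₁ p (0, 1)) - Complex.I * conj (fderiv ℝ f₁ p (0, Complex.I)))
      + (2:ℂ)⁻¹ * (fderiv ℝ f₂ p (1, 0) + Complex.I * fderiv ℝ f₂ p (Complex.I, 0)) = 0 := by
    have h := congrArg (starRingEnd ℂ) hf2
    simp only [map_sub, map_add, map_mul, map_inv₀, map_zero, Complex.conj_I,
      Complex.conj_conj, map_ofNat] at h
    linear_combination h
  have keyA : dz1c (fun q => (ρ q)⁻¹ * conj (f₁ q)) p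
      - dz2 (fun q => -((ρ q)⁻¹ * conj (f₂ q))) p
      = (ρ p)⁻¹ * (ρ p)⁻¹ *
        (conj (f₁ p) * ((f₁ p - conj (f₁ p)) * ((2:ℂ)⁻¹*(fderiv ℝ f₁ p (1,0) + Complex.I*fderiv ℝ f₁ p (Complex.I,0)))
            - f₂ p * ((2:ℂ)⁻¹*(conj (fderiv ℝ f₂ p (1,0)) + Complex.I*conj (fderiv ℝ f₂ p (Complex.I,0))))
            - conj (f₂ p) * ((2:ℂ)⁻¹*(fderiv ℝ f₁ p (0,1) - Complex.I*fderiv ℝ f₁ p (0,Complex.I))))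
        + conj (f₂ p) * (f₂ p * ((2:ℂ)⁻¹*(conj (fderiv ℝ f₁ p (1,0)) + Complex.I*conj (fderiv ℝ f₁ p (Complex.I,0))))
            + (f₁ p - conj (f₁ p)) * ((2:ℂ)⁻¹*(fderiv ℝ f₂ p (1,0) + Complex.I*fderiv ℝ f₂ p (Complex.I,0)))
            - conj (f₂ p) * ((2:ℂ)⁻¹*(fderiv ℝ f₂ p (0,1) - Complex.I*fderiv ℝ f₂ p (0,Complex.I))))) := by
    simp only [dz1c, dz2, DG1, DG2, Dρ]
    linear_combination ((((-1/2)*Complex.I)*(conj (fderiv ℝ f₁ p (Complex.I, 0)))*((ρ p)⁻¹) + (-1/2)*(conj (fderiv ℝ f₁ p (1, 0)))*((ρ p)⁻¹) + ((-1/2)*Complex.I)*(fderiv ℝ f₁ p (Complex.I, 0))*((ρ p)⁻¹) + (-1/2)*(fderiv ℝ f₁ p (1, 0))*((ρ p)⁻¹))) * hu + ((((1/2)*Complex.I)*(conj (fderiv ℝ f₁ p (Complex.I, 0)))*((ρ p)⁻¹)*((ρ p)⁻¹) + (1/2)*(conj (fderiv ℝ f₁ p (1, 0)))*((ρ p)⁻¹)*((ρ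 p)⁻¹) + ((1/2)*Complex.I)*(fderiv ℝ f₁ p (Complex.I, 0))*((ρ p)⁻¹)*((ρ p)⁻¹) + (1/2)*(fderiv ℝ f₁ p (1, 0))*((ρ p)⁻¹)*((ρ p)⁻¹))) * hρp + (((-1)*((ρ p)⁻¹) + (1)*(f₂ p)*(conj (f₂ p))*((ρ p)⁻¹)*((ρ p)⁻¹))) * hf1 + ((0:ℂ)) * hf2 + ((0:ℂ)) * h1c + (((-1)*(f₁ p)*(conj (f₂ p))*((ρ p)⁻¹)*((ρ p)⁻¹))) * h2c
  have keyB : dz2c (fun q => (ρ q)⁻¹ * conj (f₁ q)) p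
      + dz1 (fun q => -((ρ q)⁻¹ * conj (f₂ q))) p
      = (ρ p)⁻¹ * (ρ p)⁻¹ *
        (conj (f₁ p) * (conj (f₂ p) * ((2:ℂ)⁻¹*(fderiv ℝ f₁ p (1,0) - Complex.I*fderiv ℝ f₁ p (Complex.I,0)))
            + (conj (f₁ p) - f₁ p) * ((2:ℂ)⁻¹*(conj (fderiv ℝ f₂ p (1,0)) - Complex.I*conj (fderiv ℝ f₂ p (Complex.I,0))))
            - f₂ p * ((2:ℂ)⁻¹*(conj (fderiv ℝ f₂ p (0,1)) + Complex.I*conj (fderiv ℝ f₂ p (0,Complex.I)))))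
        - conj (f₂ p) * ((conj (f₁ p) - f₁ p) * ((2:ℂ)⁻¹*(conj (fderiv ℝ f₁ p (1,0)) - Complex.I*conj (fderiv ℝ f₁ p (Complex.I,0))))
            - conj (f₂ p) * ((2:ℂ)⁻¹*(fderiv ℝ f₂ p (1,0) - Complex.I*fderiv ℝ f₂ p (Complex.I,0)))
            - f₂ p * ((2:ℂ)⁻¹*(conj (fderiv ℝ f₁ p (0,1)) + Complex.I*conj (fderiv ℝ f₁ p (0,Complex.I)))))) := by
    simp only [dz2c, dz1, DG1, DG2, Dρ]
    linear_combination ((((-1/2)*Complex.I)*(conj (fderiv ℝ f₂ p (Complex.I, 0)))*((ρ p)⁻¹) + (1/2)*(conj (fderiv ℝ f₂ p (1, 0)))*((ρ p)⁻¹) + ((-1/2)*Complex.I)*(conj (fderiv ℝ f₁ p (0, Complex.I)))*((ρ p)⁻¹) + (-1/2)*(conj (fderiv ℝ f₁ p (0, 1)))*((ρ p)⁻¹))) * hu + ((((1/2)*Complex.I)*(conj (fderiv ℝ f₂ p (Complex.I, 0)))*((ρ p)⁻¹)*((ρ p)⁻¹) + (-1/2)*(conj (fderiv ℝ f₂ p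 (1, 0)))*((ρ p)⁻¹)*((ρ p)⁻¹) + ((1/2)*Complex.I)*(conj (fderiv ℝ f₁ p (0, Complex.I)))*((ρ p)⁻¹)*((ρ p)⁻¹) + (1/2)*(conj (fderiv ℝ f₁ p (0, 1)))*((ρ p)⁻¹)*((ρ p)⁻¹))) * hρp + ((0:ℂ)) * hf1 + (((-1)*(conj (f₁ p))*(conj (f₁ p))*((ρ p)⁻¹)*((ρ p)⁻¹))) * hf2 + (((1)*(conj (f₁ p))*(conj (f₂ p))*((ρ p)⁻¹)*((ρ p)⁻¹))) * h1c + ((0:ℂ)) * h2c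
  rw [keyA, keyB]
  have hinv : ∀ M : ℂ, ((ρ p)⁻¹ * (ρ p)⁻¹ * M = 0 ↔ M = 0) := by
    intro M
    rw [mul_eq_zero, mul_eq_zero]
    simp [inv_eq_zero, h0']
  rw [hinv, hinv]
  simp only [dz1, dz2c, conjf_eq, conjD]
  constructor
  · rintro ⟨q1, q2⟩
    have q1c := congrArg (starRingEnd ℂ) q1
    simp only [map_sub, map_add, map_mul, map_inv₀, map_zero, map_neg, Complex.conj_I,
      Complex.conj_conj, map_ofNat] at q1c
    constructor
    · have h : (f₁ p * conj (f₁ p) + f₂ p * conj (f₂ p)) *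
          ((conj (f₁ p) - f₁ p) * ((2:ℂ)⁻¹*(conj (fderiv ℝ f₁ p (1,0)) - Complex.I*conj (fderiv ℝ f₁ p (Complex.I,0))))
            - conj (f₂ p) * ((2:ℂ)⁻¹*(fderiv ℝ f₂ p (1,0) - Complex.I*fderiv ℝ f₂ p (Complex.I,0)))
            - f₂ p * ((2:ℂ)⁻¹*(conj (fderiv ℝ f₁ p (0,1)) + Complex.I*conj (fderiv ℝ f₁ p (0,Complex.I))))) = 0 := by
        linear_combination conj (f₁ p) * q1c - f₂ p * q2
      have h' := (mul_eq_zero.mp h).resolve_left h0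
      linear_combination h'
    · have h : (f₁ p * conj (f₁ p) + f₂ p * conj (f₂ p)) *
          (conj (f₂ p) * ((2:ℂ)⁻¹*(fderiv ℝ f₁ p (1,0) - Complex.I*fderiv ℝ f₁ p (Complex.I,0)))
            + (conj (f₁ p) - f₁ p) * ((2:ℂ)⁻¹*(conj (fderiv ℝ f₂ p (1,0)) - Complex.I*conj (fderiv ℝ f₂ p (Complex.I,0))))
            - f₂ p * ((2:ℂ)⁻¹*(conj (fderiv ℝ f₂ p (0,1)) + Complex.I*conj (fderiv ℝ f₂ p (0,Complex.I))))) = 0 := by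
        linear_combination conj (f₂ p) * q1c + f₁ p * q2
      have h' := (mul_eq_zero.mp h).resolve_left h0
      linear_combination h'
  · rintro ⟨c1, c2⟩
    have c1c := congrArg (starRingEnd ℂ) c1
    simp only [map_sub, map_add, map_mul, map_inv₀, map_zero, map_neg, Complex.conj_I,
      Complex.conj_conj, map_ofNat] at c1c
    have c2c := congrArg (starRingEnd ℂ) c2
    simp only [map_sub, map_add, map_mul, map_inv₀, map_zero, map_neg, Complex.conj_I,
      Complex.conj_conj, map_ofNat] at c2c
    constructor
    · linear_combination conj (f₁ p) * c1c + conj (f₂ p) * c2c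
    · linear_combination conj (f₁ p) * c2 - conj (f₂ p) * c1

theorem inverse_hyperholomorphic_iff (U : Set (ℂ × ℂ)) (hU : IsOpen U) (f₁ f₂ : ℂ × ℂ → ℂ)
    (h₁ : ContDiffOn ℝ (⊤ : ℕ∞) f₁ U) (h₂ : ContDiffOn ℝ (⊤ : ℕ∞) f₂ U)
    (hnv : ∀ p ∈ U, ¬(f₁ p = 0 ∧ f₂ p = 0))
    (hf : Hyperholo U f₁ f₂) :
    Hyperholo U
      (fun p => ((Complex.normSq (f₁ p) + Complex.normSq (f₂ p) : ℝ) : ℂ)⁻¹ * starRingEnd ℂ (f₁ p))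
      (fun p => -(((Complex.normSq (f₁ p) + Complex.normSq (f₂ p) : ℝ) : ℂ)⁻¹ * f₂ p)) ↔
    ∀ p ∈ U,
      (starRingEnd ℂ (f₁ p) - f₁ p) * dz1 (conjf f₁) p
        - starRingEnd ℂ (f₂ p) * dz1 f₂ p - f₂ p * dz2c (conjf f₁) p = 0 ∧
      starRingEnd ℂ (f₂ p) * dz1 f₁ p
        + (starRingEnd ℂ (f₁ p) - f₁ p) * dz1 (conjf f₂) p
        - f₂ p * dz2c (conjf f₂) p = 0 := by
  unfold Hyperholo
  refine forall₂_congr fun p hp => ?_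
  have hd1 : DifferentiableAt ℝ f₁ p := (h₁.contDiffAt (hU.mem_nhds hp)).differentiableAt (by simp)
  have hd2 : DifferentiableAt ℝ f₂ p := (h₂.contDiffAt (hU.mem_nhds hp)).differentiableAt (by simp)
  have hpos : 0 < Complex.normSq (f₁ p) + Complex.normSq (f₂ p) := by
    rcases not_and_or.mp (hnv p hp) with h | h
    · exact add_pos_of_pos_of_nonneg (Complex.normSq_pos.mpr h) (Complex.normSq_nonneg _)
    · exact add_pos_of_nonneg_of_pos (Complex.normSq_nonneg _) (Complex.normSq_pos.mpr h)
  have h0 : f₁ p * starRingEnd ℂ (f₁ p) + f₂ p * starRingEnd ℂ (f₂ p) ≠ 0 := by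
    rw [Complex.mul_conj, Complex.mul_conj, ← Complex.ofReal_add]
    exact_mod_cast hpos.ne'
  exact pointwise f₁ f₂ p hd1 hd2 h0 (hf p hp).1 (hf p hp).2
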